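/- arXiv:1401.6619 — 8 statements merged into one kernel-verified Lean document; each statement's English description precedes it below -/
import Mathlib

section
/- Let R be an Artinian commutative ring with identity 1 ≠ 0 having only finitely many ideals, and suppose R is not a direct sum of two fields, i.e. there do not exist two distinct maximal ideals m₁, m₂ of R with m₁ ∩ m₂ = 0. If the intersection graph Γ(R) is regular (there is a natural number d such that every vertex of Γ(R) has degree d), then Γ(R) is complete, i.e. any two distinct nontrivial ideals of R have nonzero intersection. -/
/-!
If two nonzero ideals `I`, `J` meet in `0` and `I + J` is proper, then every neighbour of `I`
other than `I + J` is a neighbour of `I + J`, and `I + J` is moreover adjacent to both `I`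
and `J`; so `I + J` has strictly larger degree than `I`, contradicting regularity.
Applied to atoms `a ≤ I`, `b ≤ J`, this leaves `a + b = R`: then `a` and `b` are complementary
atoms of the modular lattice of ideals, hence also coatoms, i.e. two maximal ideals with zero
intersection.
-/

section Lattice

variable {α : Type*} [Lattice α] [BoundedOrder α]

def intersectionNeighbors (a : α) : Set α :=
  {b | (b ≠ ⊥ ∧ b ≠ ⊤) ∧ b ≠ a ∧ a ⊓ b ≠ ⊥}

lemma insert_insert_intersectionNeighbors_subset {a b : α} (ha : a ≠ ⊥) (hb : b ≠ ⊥)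
    (hab : a ⊓ b = ⊥) (hsup : a ⊔ b ≠ ⊤) :
    insert a (insert b (intersectionNeighbors a)) ⊆
      insert (a ⊔ b) (intersectionNeighbors (a ⊔ b)) := by
  have hb_not_le : ¬ b ≤ a := fun h => hb (by rwa [inf_eq_right.mpr h] at hab)
  have ha_not_le : ¬ a ≤ b := fun h => ha (by rwa [inf_eq_left.mpr h] at hab)
  rintro c (rfl | rfl | ⟨⟨hc, hcT⟩, -, hac⟩)
  · refine .inr ⟨⟨ha, ne_top_of_le_ne_top hsup le_sup_left⟩, fun h => hb_not_le ?_, ?_⟩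
    · exact h ▸ le_sup_right
    · rwa [inf_eq_right.mpr le_sup_left]
  · refine .inr ⟨⟨hb, ne_top_of_le_ne_top hsup le_sup_right⟩, fun h => ha_not_le ?_, ?_⟩
    · exact h ▸ le_sup_left
    · rwa [inf_eq_right.mpr le_sup_right]
  · by_cases hc_sup : c = a ⊔ b
    · exact .inl hc_sup
    · exact .inr ⟨⟨hc, hcT⟩, hc_sup, ne_bot_of_le_ne_bot hac (inf_le_inf_right c le_sup_left)⟩

lemma ncard_intersectionNeighbors_lt_sup [Finite α] {a b : α} (ha : a ≠ ⊥) (hb : b ≠ ⊥)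
    (hab : a ⊓ b = ⊥) (hsup : a ⊔ b ≠ ⊤) :
    (intersectionNeighbors a).ncard < (intersectionNeighbors (a ⊔ b)).ncard := by
  have ha_ne_b : a ≠ b := fun h => ha (by simpa [h] using hab)
  have ha_not_mem : a ∉ insert b (intersectionNeighbors a) := by
    rintro (h | ⟨-, h, -⟩) <;> contradiction
  have hb_not_mem : b ∉ intersectionNeighbors a := fun h => h.2.2 hab
  have hle := Set.ncard_le_ncard (insert_insert_intersectionNeighbors_subset ha hb hab hsup)
  rw [Set.ncard_insert_of_notMem ha_not_mem, Set.ncard_insert_of_notMem hb_not_mem] at hle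
  have := Set.ncard_insert_le (a ⊔ b) (intersectionNeighbors (a ⊔ b))
  omega

lemma IsAtom.isCoatom_of_sup_eq_top [IsModularLattice α] {a b : α} (ha : IsAtom a)
    (hb : IsAtom b) (hab : a ≠ b) (hsup : a ⊔ b = ⊤) : IsCoatom a :=
  (IsCompl.mk (ha.disjoint_of_ne hb hab) (codisjoint_iff.mpr hsup)).symm.isAtom_iff_isCoatom.mp hb

end Lattice

theorem intersectionGraph_regular_implies_complete_general
    (R : Type*) [CommRing R] [Finite (Ideal R)]
    (h_not_two_fields : ¬ ∃ m₁ m₂ : Ideal R,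
      m₁ ≠ m₂ ∧ m₁.IsMaximal ∧ m₂.IsMaximal ∧ m₁ ⊓ m₂ = ⊥)
    (h_regular : ∃ d : ℕ, ∀ I : Ideal R, I ≠ ⊥ → I ≠ ⊤ →
      {J : Ideal R | (J ≠ ⊥ ∧ J ≠ ⊤) ∧ J ≠ I ∧ I ⊓ J ≠ ⊥}.ncard = d) :
    ∀ I J : Ideal R, I ≠ ⊥ → I ≠ ⊤ → J ≠ ⊥ → J ≠ ⊤ → I ≠ J → I ⊓ J ≠ ⊥ := by
  intro I J hI hIT hJ hJT _ hIJ
  obtain ⟨d, hd⟩ := h_regular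
  obtain ⟨a, ha, haI⟩ := (eq_bot_or_exists_atom_le I).resolve_left hI
  obtain ⟨b, hb, hbJ⟩ := (eq_bot_or_exists_atom_le J).resolve_left hJ
  have hab : a ⊓ b = ⊥ := le_bot_iff.mp (hIJ ▸ inf_le_inf haI hbJ)
  have ha_ne_b : a ≠ b := fun h => ha.1 (by simpa [h] using hab)
  by_cases hsup : a ⊔ b = ⊤
  · refine h_not_two_fields ⟨a, b, ha_ne_b, ?_, ?_, hab⟩ <;> rw [Ideal.isMaximal_def]
    · exact ha.isCoatom_of_sup_eq_top hb ha_ne_b hsup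
    · exact hb.isCoatom_of_sup_eq_top ha ha_ne_b.symm (sup_comm a b ▸ hsup)
  · have hlt := ncard_intersectionNeighbors_lt_sup ha.1 hb.1 hab hsup
    rw [intersectionNeighbors, intersectionNeighbors, hd a ha.1 (ne_top_of_le_ne_top hIT haI),
      hd _ (ne_bot_of_le_ne_bot ha.1 le_sup_left) hsup] at hlt
    exact lt_irrefl d hlt

/-- Let `R` be an Artinian commutative ring with `1 ≠ 0` having only
finitely many ideals, which is not a direct sum of two fields (there are no two distinct
maximal ideals with zero intersection).  If the intersection graph `Γ(R)` is regular
(every nontrivial ideal has the same number of neighbours), then `Γ(R)` is complete: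
any two distinct nontrivial ideals have nonzero intersection. -/
theorem intersectionGraph_regular_implies_complete
    (R : Type*) [CommRing R] [Nontrivial R] [IsArtinianRing R] [Finite (Ideal R)]
    (h_not_two_fields : ¬ ∃ m₁ m₂ : Ideal R,
      m₁ ≠ m₂ ∧ m₁.IsMaximal ∧ m₂.IsMaximal ∧ m₁ ⊓ m₂ = ⊥)
    (h_regular : ∃ d : ℕ, ∀ I : Ideal R, I ≠ ⊥ → I ≠ ⊤ →
      {J : Ideal R | (J ≠ ⊥ ∧ J ≠ ⊤) ∧ J ≠ I ∧ I ⊓ J ≠ ⊥}.ncard = d) :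
    ∀ I J : Ideal R, I ≠ ⊥ → I ≠ ⊤ → J ≠ ⊥ → J ≠ ⊤ → I ≠ J → I ⊓ J ≠ ⊥ :=
  intersectionGraph_regular_implies_complete_general R h_not_two_fields h_regular
end

section
/- Let R be an Artinian commutative ring with identity 1 ≠ 0. If the intersection graph Γ(R) is complete, i.e. any two distinct nontrivial ideals of R have nonzero intersection, then R is a local ring. -/
/-!
The prime spectrum of an Artinian ring is finite and discrete, so if the ring is not local, a
single point is a proper nonempty clopen subset of it and hence cuts out a splitting `e + f = 1`,
`e * f = 0` with `e, f ≠ 0`. The ideals `(e)` and `(f)` are then nontrivial, comaximal, and meet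
in `(e * f) = 0`, so they are distinct nonadjacent vertices of the intersection graph.
-/

open PrimeSpectrum in
theorem IsLocalRing.of_discreteTopology_primeSpectrum {R : Type*} [CommRing R] [Nontrivial R]
    [DiscreteTopology (PrimeSpectrum R)]
    (h : ∀ e f : R, e * f = 0 → e + f = 1 → e = 0 ∨ f = 0) : IsLocalRing R := by
  obtain ⟨m, hm⟩ := Ideal.exists_maximal R
  refine of_unique_max_ideal ⟨m, hm, fun n hn => ?_⟩
  obtain ⟨e, f, hmul, hadd, hs⟩ :=
    isClopen_iff_mul_add.mp (isClopen_discrete {(⟨n, hn.isPrime⟩ : PrimeSpectrum R)})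
  have he : e ≠ 0 := by
    rintro rfl
    simpa using congr_arg (⟨n, hn.isPrime⟩ ∈ ·) hs
  obtain rfl : e = 1 := by simpa [(h e f hmul hadd).resolve_left he] using hadd
  have hm_mem : (⟨m, hm.isPrime⟩ : PrimeSpectrum R) ∈ ({⟨n, hn.isPrime⟩} : Set _) := by
    simp [hs, basicOpen_one]
  exact congr_arg asIdeal (Set.mem_singleton_iff.mp hm_mem).symm

theorem Ideal.span_singleton_inf_span_singleton_eq_bot {R : Type*} [CommRing R] {e f : R}
    (hmul : e * f = 0) (hadd : e + f = 1) : span {e} ⊓ span {f} = ⊥ := by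
  rw [← mul_eq_inf_of_coprime, span_singleton_mul_span_singleton, hmul, span_singleton_eq_bot]
  rw [eq_top_iff_one, ← hadd]
  exact Submodule.add_mem_sup (mem_span_singleton_self e) (mem_span_singleton_self f)

theorem Ideal.span_singleton_ne_top_of_mul_eq_zero {R : Type*} [CommRing R] {e f : R}
    (hmul : e * f = 0) (hf : f ≠ 0) : span {e} ≠ ⊤ := by
  rw [Ne, span_singleton_eq_top]
  exact fun he => hf (he.mul_right_eq_zero.mp hmul)

/-- Let `R` be an Artinian commutative ring with `1 ≠ 0`.  If the
intersection graph `Γ(R)` is complete (any two distinct nontrivial ideals have nonzero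
intersection), then `R` is a local ring. -/
theorem intersectionGraph_complete_implies_local
    (R : Type*) [CommRing R] [Nontrivial R] [IsArtinianRing R]
    (h_complete : ∀ I J : Ideal R, I ≠ ⊥ → I ≠ ⊤ → J ≠ ⊥ → J ≠ ⊤ → I ≠ J → I ⊓ J ≠ ⊥) :
    IsLocalRing R := by
  refine IsLocalRing.of_discreteTopology_primeSpectrum fun e f hmul hadd => ?_
  by_contra! ⟨he, hf⟩
  have hinf := Ideal.span_singleton_inf_span_singleton_eq_bot hmul hadd
  have hne : Ideal.span {e} ≠ Ideal.span {f} := fun h => by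
    rw [h, inf_idem, Ideal.span_singleton_eq_bot] at hinf
    exact hf hinf
  exact h_complete _ _ (by simpa using he) (Ideal.span_singleton_ne_top_of_mul_eq_zero hmul hf)
    (by simpa using hf) (Ideal.span_singleton_ne_top_of_mul_eq_zero (mul_comm f e ▸ hmul) he)
    hne hinf
end

section
/- Let R be a commutative ring with identity 1 ≠ 0 such that: (i) there do not exist two distinct maximal ideals m₁, m₂ of R with m₁ ∩ m₂ = 0 (i.e. R is not a direct sum of two fields), and (ii) there do not exist ideals a and n of R with n maximal, a ∩ n = 0, a + n = R, and exactly one ideal c of R satisfying 0 < c < n (i.e. R is not a direct sum of a field with a local ring having exactly one nontrivial ideal). If Γ(R) has a pendant vertex, then Γ(R) is a star graph: there exists a vertex c adjacent to every other vertex such that every edge of Γ(R) is incident to c. -/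
/-!
Everything happens in the lattice of ideals, which is modular and coatomic. Let `a` be a pendant
vertex with unique neighbour `b`. Since `a ⊓ b` is a nontrivial ideal meeting `a`, it equals `a`
or `b`, so `a` and `b` are comparable; coatomicity then leaves two cases.

If `b < a` then `a` is maximal, and any third vertex would lie in a maximal ideal meeting `a` in
`0`, so `R` would be a sum of two fields. Hence `a`, `b` are the only vertices.

If `a < b` then `b` is maximal, `a` is minimal, and `b` is the centre. For every vertex `u` with
`a ⊓ u = 0`, modularity turns `(a ⊔ t) ⊓ u = t` into `t = b ⊓ u` for each `0 < t < u`; if such a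
`t` existed, `u` would be a maximal complement of the minimal ideal `a` with exactly one ideal
below it. So all such `u` are minimal, and two distinct minimal ideals do not meet.
-/

namespace IntersectionGraph

variable {α : Type*} [Lattice α] [BoundedOrder α] {a b t u v : α}

/- The intersection graph of a bounded lattice: its vertices are the elements other than `⊥` and
`⊤`, and two distinct vertices `u`, `v` are adjacent when `u ⊓ v ≠ ⊥`. -/
structure IsPendant (a b : α) : Prop where
  ne_bot : a ≠ ⊥
  ne_top : a ≠ ⊤
  neighbor_ne_bot : b ≠ ⊥
  neighbor_ne_top : b ≠ ⊤
  neighbor_ne : b ≠ a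
  inf_neighbor_ne_bot : a ⊓ b ≠ ⊥
  eq_neighbor : ∀ v, v ≠ ⊥ → v ≠ ⊤ → v ≠ a → a ⊓ v ≠ ⊥ → v = b

def IsStarCenter (c : α) : Prop :=
  c ≠ ⊥ ∧ c ≠ ⊤ ∧ (∀ v, v ≠ ⊥ → v ≠ ⊤ → v ≠ c → c ⊓ v ≠ ⊥) ∧
    ∀ u v, u ≠ ⊥ → u ≠ ⊤ → v ≠ ⊥ → v ≠ ⊤ → u ≠ v → u ⊓ v ≠ ⊥ → u = c ∨ v = c

theorem isStarCenter_of_forall_eq_or_eq (ha0 : a ≠ ⊥) (haT : a ≠ ⊤) (hab : a ⊓ b ≠ ⊥)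
    (hvertex : ∀ v, v ≠ ⊥ → v ≠ ⊤ → v = a ∨ v = b) : IsStarCenter a := by
  refine ⟨ha0, haT, fun v hv0 hvT hva => ?_, fun u v hu0 huT hv0 hvT huv _ => ?_⟩
  · rwa [(hvertex v hv0 hvT).resolve_left hva]
  · rcases hvertex u hu0 huT with rfl | rfl
    · exact .inl rfl
    · exact .inr ((hvertex v hv0 hvT).resolve_right (Ne.symm huv))

namespace IsPendant

theorem inf_eq_bot (h : IsPendant a b) (hv0 : v ≠ ⊥) (hvT : v ≠ ⊤) (hva : v ≠ a) (hvb : v ≠ b) :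
    a ⊓ v = ⊥ := by
  by_contra hav
  exact hvb (h.eq_neighbor v hv0 hvT hva hav)

theorem lt_or_gt (h : IsPendant a b) : a < b ∨ b < a := by
  by_cases hinf : a ⊓ b = a
  · exact .inl (lt_of_le_of_ne (inf_eq_left.mp hinf) h.neighbor_ne.symm)
  · have hinf_ne_top : a ⊓ b ≠ ⊤ := fun hT => h.ne_top (top_le_iff.mp (hT ▸ inf_le_left))
    have hinf_eq : a ⊓ b = b :=
      h.eq_neighbor _ h.inf_neighbor_ne_bot hinf_ne_top hinf
        (by rw [← inf_assoc, inf_idem]; exact h.inf_neighbor_ne_bot)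
    exact .inr (lt_of_le_of_ne (inf_eq_right.mp hinf_eq) h.neighbor_ne)

theorem isAtom_of_lt (h : IsPendant a b) (hab : a < b) : IsAtom a := by
  refine ⟨h.ne_bot, fun x hxa => by_contra fun hx0 => ?_⟩
  have hxb := h.eq_neighbor x hx0 (ne_top_of_lt (hxa.trans_le le_top)) hxa.ne
    (by rwa [inf_eq_right.mpr hxa.le])
  exact (hxb ▸ hxa).asymm hab

theorem sup_eq_or_eq_top (h : IsPendant a b) (hv0 : v ≠ ⊥) (hav : a ⊓ v = ⊥) :
    a ⊔ v = b ∨ a ⊔ v = ⊤ := by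
  refine or_iff_not_imp_right.mpr fun hsup => h.eq_neighbor _ ?_ hsup ?_ ?_
  · exact fun hbot => h.ne_bot (le_bot_iff.mp (hbot ▸ le_sup_left))
  · exact fun hsup_a => hv0 (by rw [← hav, inf_eq_right.mpr (sup_eq_left.mp hsup_a)])
  · rw [inf_sup_self]
    exact h.ne_bot

theorem isCoatom_of_gt [IsCoatomic α] (h : IsPendant a b) (hba : b < a) : IsCoatom a := by
  obtain ⟨m, hm, ham⟩ := (eq_top_or_exists_le_coatom a).resolve_left h.ne_top
  obtain rfl : a = m := by
    by_contra hma
    have hmb := h.eq_neighbor m (ne_bot_of_le_ne_bot h.ne_bot ham) hm.1 (Ne.symm hma)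
      (by rw [inf_eq_left.mpr ham]; exact h.ne_bot)
    exact (hba.trans_le ham).ne hmb.symm
  exact hm

theorem isStarCenter_of_gt [IsCoatomic α]
    (h_two : ¬ ∃ m₁ m₂ : α, m₁ ≠ m₂ ∧ IsCoatom m₁ ∧ IsCoatom m₂ ∧ m₁ ⊓ m₂ = ⊥)
    (h : IsPendant a b) (hba : b < a) : IsStarCenter a := by
  refine isStarCenter_of_forall_eq_or_eq h.ne_bot h.ne_top h.inf_neighbor_ne_bot
    fun v hv0 hvT => by_contra fun hv => ?_
  obtain ⟨hva, hvb⟩ := not_or.mp hv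
  obtain ⟨m, hm, hvm⟩ := (eq_top_or_exists_le_coatom v).resolve_left hvT
  have hav := h.inf_eq_bot hv0 hvT hva hvb
  have hma : m ≠ a := by
    rintro rfl
    exact hv0 (by rwa [inf_eq_right.mpr hvm] at hav)
  have hmb : m ≠ b := by
    rintro rfl
    exact h.ne_top (hm.lt_iff.mp hba)
  have hm0 : m ≠ ⊥ := fun hbot => hv0 (le_bot_iff.mp (hbot ▸ hvm))
  exact h_two ⟨a, m, hma.symm, h.isCoatom_of_gt hba, hm, h.inf_eq_bot hm0 hm.1 hma hmb⟩

variable [IsModularLattice α]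

theorem inf_ne_bot_of_lt (h : IsPendant a b) (hab : a < b) (hv0 : v ≠ ⊥) (hvT : v ≠ ⊤)
    (hvb : v ≠ b) : b ⊓ v ≠ ⊥ := by
  rcases eq_or_ne v a with rfl | hva
  · rw [inf_comm]
    exact h.inf_neighbor_ne_bot
  have hav := h.inf_eq_bot hv0 hvT hva hvb
  rcases h.sup_eq_or_eq_top hv0 hav with hsup | hsup
  · rw [inf_eq_right.mpr (hsup ▸ le_sup_right)]
    exact hv0
  · intro hbv
    have hmod : (a ⊔ v) ⊓ b = a ⊔ v ⊓ b := sup_inf_assoc_of_le v hab.le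
    rw [hsup, top_inf_eq, inf_comm v b, hbv, sup_bot_eq] at hmod
    exact h.neighbor_ne hmod

theorem eq_inf_and_sup_eq_top_of_lt (h : IsPendant a b) (ht0 : t ≠ ⊥) (htu : t < u)
    (hau : a ⊓ u = ⊥) : t = b ⊓ u ∧ a ⊔ u = ⊤ := by
  have hat : a ⊓ t = ⊥ := le_bot_iff.mp (hau ▸ inf_le_inf_left a htu.le)
  have hmod : (a ⊔ t) ⊓ u = t := by
    rw [sup_comm, sup_inf_assoc_of_le a htu.le, hau, sup_bot_eq]
  have hsup_t : a ⊔ t = b := (h.sup_eq_or_eq_top ht0 hat).resolve_right fun hT => by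
    rw [hT, top_inf_eq] at hmod
    exact htu.ne hmod.symm
  rw [hsup_t] at hmod
  refine ⟨hmod.symm, (h.sup_eq_or_eq_top (ne_bot_of_gt htu) hau).resolve_left fun hsup_u => ?_⟩
  rw [inf_eq_right.mpr (hsup_u ▸ le_sup_right)] at hmod
  exact htu.ne hmod.symm

theorem isAtom_of_inf_eq_bot
    (h_special : ¬ ∃ a n : α, IsCoatom n ∧ a ⊓ n = ⊥ ∧ a ⊔ n = ⊤ ∧ ∃! c, ⊥ < c ∧ c < n)
    (h : IsPendant a b) (hab : a < b) (hu0 : u ≠ ⊥) (hau : a ⊓ u = ⊥) : IsAtom u := by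
  refine ⟨hu0, fun t htu => by_contra fun ht0 => h_special ?_⟩
  obtain ⟨htbu, hsup⟩ := h.eq_inf_and_sup_eq_top_of_lt ht0 htu hau
  have hcompl : IsCompl a u := ⟨disjoint_iff.mpr hau, codisjoint_iff.mpr hsup⟩
  refine ⟨a, u, hcompl.isAtom_iff_isCoatom.mp (h.isAtom_of_lt hab), hau, hsup, t,
    ⟨bot_lt_iff_ne_bot.mpr ht0, htu⟩, fun c ⟨hc0, hcu⟩ => ?_⟩
  rw [htbu]
  exact (h.eq_inf_and_sup_eq_top_of_lt hc0.ne' hcu hau).1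

theorem isStarCenter_of_lt
    (h_special : ¬ ∃ a n : α, IsCoatom n ∧ a ⊓ n = ⊥ ∧ a ⊔ n = ⊤ ∧ ∃! c, ⊥ < c ∧ c < n)
    (h : IsPendant a b) (hab : a < b) : IsStarCenter b := by
  refine ⟨h.neighbor_ne_bot, h.neighbor_ne_top, fun v => h.inf_ne_bot_of_lt hab,
    fun u v hu0 huT hv0 hvT huv huv0 => by_contra fun hne => ?_⟩
  obtain ⟨hub, hvb⟩ := not_or.mp hne
  have endpoint_ne_a : ∀ {x y : α}, x ⊓ y ≠ ⊥ → y ≠ ⊥ → y ≠ ⊤ → y ≠ x → y ≠ b → x ≠ a := by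
    rintro x y hxy hy0 hyT hyx hyb rfl
    exact hyb (h.eq_neighbor y hy0 hyT hyx hxy)
  have hua := endpoint_ne_a huv0 hv0 hvT (Ne.symm huv) hvb
  have hva := endpoint_ne_a (inf_comm u v ▸ huv0) hu0 huT huv hub
  have hu := h.isAtom_of_inf_eq_bot h_special hab hu0 (h.inf_eq_bot hu0 huT hua hub)
  have hv := h.isAtom_of_inf_eq_bot h_special hab hv0 (h.inf_eq_bot hv0 hvT hva hvb)
  exact huv0 (hu.disjoint_of_ne hv huv).eq_bot

theorem exists_isStarCenter [IsCoatomic α]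
    (h_two : ¬ ∃ m₁ m₂ : α, m₁ ≠ m₂ ∧ IsCoatom m₁ ∧ IsCoatom m₂ ∧ m₁ ⊓ m₂ = ⊥)
    (h_special : ¬ ∃ a n : α, IsCoatom n ∧ a ⊓ n = ⊥ ∧ a ⊔ n = ⊤ ∧ ∃! c, ⊥ < c ∧ c < n)
    (h : IsPendant a b) : ∃ c : α, IsStarCenter c := by
  rcases h.lt_or_gt with hab | hba
  exacts [⟨b, h.isStarCenter_of_lt h_special hab⟩, ⟨a, h.isStarCenter_of_gt h_two hba⟩]

end IsPendant

end IntersectionGraph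

open IntersectionGraph in
theorem intersectionGraph_pendant_implies_star_general
    (R : Type*) [CommRing R]
    (h_not_two_fields : ¬ ∃ m₁ m₂ : Ideal R,
      m₁ ≠ m₂ ∧ m₁.IsMaximal ∧ m₂.IsMaximal ∧ m₁ ⊓ m₂ = ⊥)
    (h_not_field_plus_special_local : ¬ ∃ a n : Ideal R,
      n.IsMaximal ∧ a ⊓ n = ⊥ ∧ a ⊔ n = ⊤ ∧ (∃! c : Ideal R, ⊥ < c ∧ c < n))
    (h_pendant : ∃ a : Ideal R, a ≠ ⊥ ∧ a ≠ ⊤ ∧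
      ∃! b : Ideal R, (b ≠ ⊥ ∧ b ≠ ⊤) ∧ b ≠ a ∧ a ⊓ b ≠ ⊥) :
    ∃ c : Ideal R, c ≠ ⊥ ∧ c ≠ ⊤ ∧
      (∀ v : Ideal R, v ≠ ⊥ → v ≠ ⊤ → v ≠ c → c ⊓ v ≠ ⊥) ∧
      (∀ u v : Ideal R, u ≠ ⊥ → u ≠ ⊤ → v ≠ ⊥ → v ≠ ⊤ → u ≠ v → u ⊓ v ≠ ⊥ →
        u = c ∨ v = c) := by
  obtain ⟨a, ha0, haT, b, ⟨⟨hb0, hbT⟩, hba, hab⟩, huniq⟩ := h_pendant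
  have hpendant : IsPendant a b :=
    ⟨ha0, haT, hb0, hbT, hba, hab, fun v hv0 hvT hva hav => huniq v ⟨⟨hv0, hvT⟩, hva, hav⟩⟩
  simp only [Ideal.isMaximal_def] at h_not_two_fields h_not_field_plus_special_local
  exact hpendant.exists_isStarCenter h_not_two_fields h_not_field_plus_special_local

/-- Let `R` be a commutative ring with `1 ≠ 0` which is neither a direct
sum of two fields (no two distinct maximal ideals with zero intersection), nor a direct sum
of a field with a local ring whose maximal ideal is a field (no ideals `a`, `n` with `n`
maximal, `a ⊓ n = 0`, `a + n = R`, and exactly one ideal strictly between `0` and `n`).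
If the intersection graph `Γ(R)` has a pendant vertex, then `Γ(R)` is a star graph. -/
theorem intersectionGraph_pendant_implies_star
    (R : Type*) [CommRing R] [Nontrivial R]
    (h_not_two_fields : ¬ ∃ m₁ m₂ : Ideal R,
      m₁ ≠ m₂ ∧ m₁.IsMaximal ∧ m₂.IsMaximal ∧ m₁ ⊓ m₂ = ⊥)
    (h_not_field_plus_special_local : ¬ ∃ a n : Ideal R,
      n.IsMaximal ∧ a ⊓ n = ⊥ ∧ a ⊔ n = ⊤ ∧ (∃! c : Ideal R, ⊥ < c ∧ c < n))
    (h_pendant : ∃ a : Ideal R, a ≠ ⊥ ∧ a ≠ ⊤ ∧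
      ∃! b : Ideal R, (b ≠ ⊥ ∧ b ≠ ⊤) ∧ b ≠ a ∧ a ⊓ b ≠ ⊥) :
    ∃ c : Ideal R, c ≠ ⊥ ∧ c ≠ ⊤ ∧
      (∀ v : Ideal R, v ≠ ⊥ → v ≠ ⊤ → v ≠ c → c ⊓ v ≠ ⊥) ∧
      (∀ u v : Ideal R, u ≠ ⊥ → u ≠ ⊤ → v ≠ ⊥ → v ≠ ⊤ → u ≠ v → u ⊓ v ≠ ⊥ →
        u = c ∨ v = c) :=
  intersectionGraph_pendant_implies_star_general R h_not_two_fields h_not_field_plus_special_local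
    h_pendant
end

section
/- Let R be a commutative ring with identity 1 ≠ 0. If the intersection graph Γ(R) is triangle-free (it contains no three pairwise adjacent vertices), then either Γ(R) has at most two vertices and no edges, or there exists a vertex c of Γ(R) that is adjacent to every other vertex and such that every edge of Γ(R) is incident to c (i.e. Γ(R) is a star graph). -/
/-!
In a triangle-free intersection graph, adjacent ideals are comparable, since otherwise their
intersection would be a third vertex adjacent to both. Ideals also satisfy: if `I + K = R` and
`J ∩ K = 0` then `J ≤ I`, as `J = J (I + K) ⊆ I + J ∩ K`. If there is an edge `I < J`, a vertex `K`
not adjacent to `J` would force `I + K = R` (otherwise `I`, `J`, `I + K` form a triangle), hence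
`J ≤ I`; so `J` is adjacent to every other vertex, and then any edge avoiding `J` closes a triangle
with it. If there is no edge, any two distinct vertices `I`, `J` satisfy `I + J = R`, so a third
vertex `K` with `J ∩ K = 0` would lie in `I`, giving `K = I ∩ K = 0`.
-/

theorem Ideal.le_of_codisjoint_of_disjoint {R : Type*} [CommSemiring R] {I J K : Ideal R}
    (hIK : Codisjoint I K) (hJK : Disjoint J K) : J ≤ I :=
  calc J = J * (I ⊔ K) := by rw [codisjoint_iff.mp hIK, Ideal.mul_top]
    _ = J * I ⊔ J * K := Ideal.mul_sup J I K
    _ ≤ I ⊔ ⊥ := sup_le_sup Ideal.mul_le_right (Ideal.mul_le_inf.trans_eq (disjoint_iff.mp hJK))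
    _ = I := sup_bot_eq I

/-- `⊥` and `⊤` are kept as isolated vertices, so the edges are exactly those of the graph on
`α \ {⊥, ⊤}`. -/
def intersectionGraph (α : Type*) [Lattice α] [BoundedOrder α] : SimpleGraph α where
  Adj a b := a ≠ b ∧ a ≠ ⊤ ∧ b ≠ ⊤ ∧ a ⊓ b ≠ ⊥
  symm := ⟨fun _ _ ⟨hab, ha, hb, h⟩ => ⟨hab.symm, hb, ha, by rwa [inf_comm]⟩⟩
  loopless := ⟨fun _ h => h.1 rfl⟩

namespace intersectionGraph

variable {α : Type*} [Lattice α] [BoundedOrder α] {a b c : α}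

theorem ne_top_of_adj (h : (intersectionGraph α).Adj a b) : a ≠ ⊤ :=
  h.2.1

theorem inf_ne_bot_of_adj (h : (intersectionGraph α).Adj a b) : a ⊓ b ≠ ⊥ :=
  h.2.2.2

theorem ne_bot_of_adj (h : (intersectionGraph α).Adj a b) : a ≠ ⊥ :=
  fun ha => inf_ne_bot_of_adj h (by simp [ha])

theorem adj_of_lt (ha : a ≠ ⊥) (hab : a < b) (hb : b ≠ ⊤) : (intersectionGraph α).Adj a b :=
  ⟨hab.ne, hab.trans_le le_top |>.ne, hb, by rwa [inf_eq_left.mpr hab.le]⟩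

theorem adj_sup (ha : a ≠ ⊥) (hc : c ≠ ⊥) (hac : a ⊓ c = ⊥) (h : a ⊔ c ≠ ⊤) :
    (intersectionGraph α).Adj a (a ⊔ c) :=
  adj_of_lt ha (left_lt_sup.mpr fun hca => hc (by rwa [inf_eq_right.mpr hca] at hac)) h

theorem inf_eq_bot_of_not_adj (hab : a ≠ b) (ha : a ≠ ⊤) (hb : b ≠ ⊤)
    (h : ¬(intersectionGraph α).Adj a b) : a ⊓ b = ⊥ :=
  not_not.mp fun h' => h ⟨hab, ha, hb, h'⟩

theorem not_isTriangle (hT : (intersectionGraph α).CliqueFree 3)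
    (hab : (intersectionGraph α).Adj a b) (hac : (intersectionGraph α).Adj a c)
    (hbc : (intersectionGraph α).Adj b c) : False := by
  classical
  exact hT {a, b, c} (SimpleGraph.is3Clique_triple_iff.mpr ⟨hab, hac, hbc⟩)

theorem cliqueFree_three_of_not_exists
    (h : ¬∃ a b c : α, (a ≠ ⊥ ∧ a ≠ ⊤) ∧ (b ≠ ⊥ ∧ b ≠ ⊤) ∧ (c ≠ ⊥ ∧ c ≠ ⊤) ∧
      a ≠ b ∧ b ≠ c ∧ a ≠ c ∧ a ⊓ b ≠ ⊥ ∧ b ⊓ c ≠ ⊥ ∧ a ⊓ c ≠ ⊥) :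
    (intersectionGraph α).CliqueFree 3 := by
  classical
  intro s hs
  obtain ⟨a, b, c, hab, hac, hbc, rfl⟩ := SimpleGraph.is3Clique_iff.mp hs
  exact h ⟨a, b, c, ⟨ne_bot_of_adj hab, ne_top_of_adj hab⟩, ⟨ne_bot_of_adj hbc, ne_top_of_adj hbc⟩,
    ⟨ne_bot_of_adj hac.symm, ne_top_of_adj hac.symm⟩, hab.ne, hbc.ne, hac.ne,
    inf_ne_bot_of_adj hab, inf_ne_bot_of_adj hbc, inf_ne_bot_of_adj hac⟩

theorem le_or_le_of_adj (hT : (intersectionGraph α).CliqueFree 3)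
    (h : (intersectionGraph α).Adj a b) : a ≤ b ∨ b ≤ a := by
  by_contra! hne
  have hinf := inf_ne_bot_of_adj h
  exact not_isTriangle hT (adj_of_lt hinf (inf_lt_left.mpr hne.1) (ne_top_of_adj h))
    (adj_of_lt hinf (inf_lt_right.mpr hne.2) (ne_top_of_adj h.symm)) h

theorem adj_of_lt_of_ne (hT : (intersectionGraph α).CliqueFree 3)
    (hP : ∀ a b c : α, Codisjoint a c → Disjoint b c → b ≤ a)
    (ha : a ≠ ⊥) (hab : a < b) (hb : b ≠ ⊤) (v : α) (hv : v ≠ ⊥)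
    (hvt : v ≠ ⊤) (hvb : v ≠ b) : (intersectionGraph α).Adj b v := by
  by_contra hnadj
  have hbv : b ⊓ v = ⊥ := inf_eq_bot_of_not_adj hvb.symm hb hvt hnadj
  have hav : a ⊓ v = ⊥ := le_bot_iff.mp (hbv ▸ inf_le_inf_right v hab.le)
  have hsup : a ⊔ v = ⊤ := by
    by_contra hsup
    have hb_ne : b ≠ a ⊔ v := fun h => hv (by rwa [h, inf_eq_right.mpr le_sup_right] at hbv)
    have hb_adj : b ⊓ (a ⊔ v) ≠ ⊥ := fun h => ha (le_bot_iff.mp (h ▸ le_inf hab.le le_sup_left))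
    exact not_isTriangle hT (adj_of_lt ha hab hb) (adj_sup ha hv hav hsup)
      ⟨hb_ne, hb, hsup, hb_adj⟩
  exact hab.not_ge (hP a b v (codisjoint_iff.mpr hsup) (disjoint_iff.mpr hbv))

theorem eq_or_eq_or_eq_of_forall_not_adj
    (hP : ∀ a b c : α, Codisjoint a c → Disjoint b c → b ≤ a)
    (hE : ∀ a b : α, ¬(intersectionGraph α).Adj a b)
    (ha : a ≠ ⊥) (hat : a ≠ ⊤) (hb : b ≠ ⊥) (hbt : b ≠ ⊤) (hc : c ≠ ⊥) (hct : c ≠ ⊤) :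
    a = b ∨ b = c ∨ a = c := by
  by_contra! ⟨hab, hbc, hac⟩
  have hab' := inf_eq_bot_of_not_adj hab hat hbt (hE a b)
  have hsup : a ⊔ b = ⊤ := not_not.mp fun h => hE a (a ⊔ b) (adj_sup ha hb hab' h)
  have hca : c ≤ a := hP a c b (codisjoint_iff.mpr hsup)
    (disjoint_iff.mpr (by rw [inf_comm]; exact inf_eq_bot_of_not_adj hbc hbt hct (hE b c)))
  have hac' := inf_eq_bot_of_not_adj hac hat hct (hE a c)
  exact hc (by rwa [inf_eq_right.mpr hca] at hac')

theorem forall_not_adj_or_isStar (hT : (intersectionGraph α).CliqueFree 3)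
    (hP : ∀ a b c : α, Codisjoint a c → Disjoint b c → b ≤ a) :
    ((∀ a b c : α, a ≠ ⊥ → a ≠ ⊤ → b ≠ ⊥ → b ≠ ⊤ → c ≠ ⊥ → c ≠ ⊤ → a = b ∨ b = c ∨ a = c) ∧
      ∀ a b : α, ¬(intersectionGraph α).Adj a b) ∨
    ∃ c : α, c ≠ ⊥ ∧ c ≠ ⊤ ∧ (∀ v, v ≠ ⊥ → v ≠ ⊤ → v ≠ c → (intersectionGraph α).Adj c v) ∧
      ∀ u v, (intersectionGraph α).Adj u v → u = c ∨ v = c := by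
  by_cases hE : ∀ a b : α, ¬(intersectionGraph α).Adj a b
  · exact Or.inl ⟨fun a b c => eq_or_eq_or_eq_of_forall_not_adj hP hE, hE⟩
  simp only [not_forall, not_not] at hE
  obtain ⟨a, b, hab⟩ := hE
  wlog hle : a ≤ b generalizing a b
  · exact this b a hab.symm ((le_or_le_of_adj hT hab).resolve_left hle)
  have hb := ne_top_of_adj hab.symm
  have hcentre := adj_of_lt_of_ne hT hP (ne_bot_of_adj hab) (hle.lt_of_ne hab.ne) hb
  refine Or.inr ⟨b, ne_bot_of_adj hab.symm, hb, hcentre, fun u v huv => ?_⟩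
  by_contra! ⟨hu, hv⟩
  exact not_isTriangle hT huv (hcentre u (ne_bot_of_adj huv) (ne_top_of_adj huv) hu).symm
    (hcentre v (ne_bot_of_adj huv.symm) (ne_top_of_adj huv.symm) hv).symm

end intersectionGraph

theorem intersectionGraph_triangleFree_general
    (R : Type*) [CommRing R]
    (h_triangle_free : ¬ ∃ I J K : Ideal R,
      (I ≠ ⊥ ∧ I ≠ ⊤) ∧ (J ≠ ⊥ ∧ J ≠ ⊤) ∧ (K ≠ ⊥ ∧ K ≠ ⊤) ∧
      I ≠ J ∧ J ≠ K ∧ I ≠ K ∧ I ⊓ J ≠ ⊥ ∧ J ⊓ K ≠ ⊥ ∧ I ⊓ K ≠ ⊥) :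
    ((∀ I J K : Ideal R, I ≠ ⊥ → I ≠ ⊤ → J ≠ ⊥ → J ≠ ⊤ → K ≠ ⊥ → K ≠ ⊤ →
        I = J ∨ J = K ∨ I = K) ∧
      (∀ I J : Ideal R, I ≠ ⊥ → I ≠ ⊤ → J ≠ ⊥ → J ≠ ⊤ → I ≠ J → I ⊓ J = ⊥)) ∨
    (∃ c : Ideal R, c ≠ ⊥ ∧ c ≠ ⊤ ∧
      (∀ v : Ideal R, v ≠ ⊥ → v ≠ ⊤ → v ≠ c → c ⊓ v ≠ ⊥) ∧
      (∀ u v : Ideal R, u ≠ ⊥ → u ≠ ⊤ → v ≠ ⊥ → v ≠ ⊤ → u ≠ v → u ⊓ v ≠ ⊥ →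
        u = c ∨ v = c)) := by
  have hT := intersectionGraph.cliqueFree_three_of_not_exists h_triangle_free
  rcases intersectionGraph.forall_not_adj_or_isStar hT
    (fun _ _ _ => Ideal.le_of_codisjoint_of_disjoint) with ⟨h3, hE⟩ | ⟨c, hc, hct, hcentre, hinc⟩
  · exact Or.inl ⟨h3, fun I J _ hIt _ hJt hIJ =>
      intersectionGraph.inf_eq_bot_of_not_adj hIJ hIt hJt (hE I J)⟩
  · exact Or.inr ⟨c, hc, hct, fun v hv hvt hvc =>
      intersectionGraph.inf_ne_bot_of_adj (hcentre v hv hvt hvc),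
      fun u v _ hut _ hvt huv h => hinc u v ⟨huv, hut, hvt, h⟩⟩

/-- Let `R` be a commutative ring with `1 ≠ 0`.  If the intersection graph
`Γ(R)` is triangle-free, then either `Γ(R)` has at most two vertices and no edges, or
`Γ(R)` is a star graph: some vertex `c` is adjacent to all other vertices and every edge
is incident to `c`. -/
theorem intersectionGraph_triangleFree
    (R : Type*) [CommRing R] [Nontrivial R]
    (h_triangle_free : ¬ ∃ I J K : Ideal R,
      (I ≠ ⊥ ∧ I ≠ ⊤) ∧ (J ≠ ⊥ ∧ J ≠ ⊤) ∧ (K ≠ ⊥ ∧ K ≠ ⊤) ∧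
      I ≠ J ∧ J ≠ K ∧ I ≠ K ∧ I ⊓ J ≠ ⊥ ∧ J ⊓ K ≠ ⊥ ∧ I ⊓ K ≠ ⊥) :
    ((∀ I J K : Ideal R, I ≠ ⊥ → I ≠ ⊤ → J ≠ ⊥ → J ≠ ⊤ → K ≠ ⊥ → K ≠ ⊤ →
        I = J ∨ J = K ∨ I = K) ∧
      (∀ I J : Ideal R, I ≠ ⊥ → I ≠ ⊤ → J ≠ ⊥ → J ≠ ⊤ → I ≠ J → I ⊓ J = ⊥)) ∨
    (∃ c : Ideal R, c ≠ ⊥ ∧ c ≠ ⊤ ∧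
      (∀ v : Ideal R, v ≠ ⊥ → v ≠ ⊤ → v ≠ c → c ⊓ v ≠ ⊥) ∧
      (∀ u v : Ideal R, u ≠ ⊥ → u ≠ ⊤ → v ≠ ⊥ → v ≠ ⊤ → u ≠ v → u ⊓ v ≠ ⊥ →
        u = c ∨ v = c)) :=
  intersectionGraph_triangleFree_general R h_triangle_free
end

section
/- Let R be a commutative ring with identity 1 ≠ 0. The intersection graph Γ(R) contains an induced cycle of length 4 if and only if there exist four nonzero independent ideals a₁, a₂, a₃, a₄ of R. Equivalently, Γ(R) is C₄-free if and only if R has no set of four nonzero independent ideals. -/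
/-!
An induced 4-cycle `v₀ v₁ v₂ v₃` has `v₀ ∩ v₂ = v₁ ∩ v₃ = 0`, and its four edge intersections
`vᵢ ∩ vᵢ₊₁` are nonzero and independent: an element of `v₀ ∩ v₁` lying in the sum of the other three
lies in `v₀`, so its component in `v₁ ∩ v₂ + v₂ ∩ v₃ ⊆ v₂` vanishes, and it then lies in `v₁ ∩ v₃`.
Conversely, for independent nonzero `aᵢ` the ideals `aᵢ + aᵢ₊₁` form an induced 4-cycle: opposite
ones are spanned by disjoint sets of the `aⱼ`, consecutive ones share `aᵢ₊₁`.
Only the modular law of the lattice of ideals enters.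
-/

open Finset

section FourCycle

variable {α : Type*} [Lattice α] [BoundedOrder α]

/-- `v` induces a 4-cycle in the intersection graph of `α`, whose vertices are the elements other
than `⊥` and `⊤`, two being adjacent when their meet is not `⊥`. -/
def IsInducedFourCycle (v : Fin 4 → α) : Prop :=
  (∀ i, v i ≠ ⊥ ∧ v i ≠ ⊤) ∧ Function.Injective v ∧
    ∀ i j, i ≠ j → (v i ⊓ v j ≠ ⊥ ↔ (j.val = (i.val + 1) % 4 ∨ i.val = (j.val + 1) % 4))

theorem isInducedFourCycle_iff {v : Fin 4 → α} :
    IsInducedFourCycle v ↔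
      (∀ i, v i ≠ ⊤) ∧ (∀ i, v i ⊓ v (i + 1) ≠ ⊥) ∧ ∀ i, Disjoint (v i) (v (i + 2)) := by
  have succ_iff (i j : Fin 4) : j.val = (i.val + 1) % 4 ↔ j = i + 1 := by grind
  have cases_of_ne (i j : Fin 4) (h : i ≠ j) : j = i + 1 ∨ i = j + 1 ∨ j = i + 2 := by grind
  simp only [IsInducedFourCycle, succ_iff]
  constructor
  · rintro ⟨hnt, -, hadj⟩
    refine ⟨fun i => (hnt i).2, fun i => (hadj i (i + 1) (by grind)).2 (.inl rfl), fun i => ?_⟩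
    exact disjoint_iff.2 (not_not.1 fun h => by grind [(hadj i (i + 2) (by grind)).1 h])
  · rintro ⟨htop, hadj, hdisj⟩
    have hbot (i : Fin 4) : v i ≠ ⊥ := fun h => hadj i (by simp [h])
    have hadj' (i : Fin 4) : v (i + 1) ⊓ v i ≠ ⊥ := inf_comm (v i) _ ▸ hadj i
    have hopp (i : Fin 4) : v i ⊓ v (i + 2) = ⊥ := disjoint_iff.1 (hdisj i)
    have hsucc (i : Fin 4) : v i ≠ v (i + 1) := fun h => by
      have := hadj (i + 1)
      rw [show i + 1 + 1 = i + 2 by grind, ← h] at this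
      exact this (hopp i)
    refine ⟨fun i => ⟨hbot i, htop i⟩, fun i j h => ?_, fun i j hij => ?_⟩
    · by_contra hij
      obtain rfl | rfl | rfl := cases_of_ne i j hij
      · exact hsucc i h
      · exact hsucc j h.symm
      · exact hbot i (by rw [← hopp i, ← h, inf_idem])
    · obtain rfl | rfl | rfl := cases_of_ne i j hij
      · simpa using hadj i
      · simpa using hadj' j
      · exact iff_of_false (not_not.2 (hopp i)) (by grind)

end FourCycle

theorem disjoint_inf_sup_of_disjoint_diagonals {α : Type*} [Lattice α] [OrderBot α]
    [IsModularLattice α] {v₀ v₁ v₂ v₃ : α} (h₀₂ : Disjoint v₀ v₂) (h₁₃ : Disjoint v₁ v₃) :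
    Disjoint (v₀ ⊓ v₁) (v₁ ⊓ v₂ ⊔ v₂ ⊓ v₃ ⊔ v₃ ⊓ v₀) := by
  have h₁ : Disjoint (v₀ ⊓ v₁) (v₃ ⊓ v₀) := h₁₃.mono inf_le_right inf_le_left
  have h₂ : Disjoint (v₀ ⊓ v₁ ⊔ v₃ ⊓ v₀) (v₁ ⊓ v₂ ⊔ v₂ ⊓ v₃) :=
    h₀₂.mono (sup_le inf_le_left inf_le_right) (sup_le inf_le_right inf_le_left)
  rw [sup_comm]
  exact h₁.disjoint_sup_right_of_disjoint_sup_left h₂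

theorem iSupIndep_fin_four {α : Type*} [CompleteLattice α] {f : Fin 4 → α} :
    iSupIndep f ↔ ∀ i, Disjoint (f i) (f (i + 1) ⊔ f (i + 2) ⊔ f (i + 3)) := by
  have erase_eq (i : Fin 4) : univ.erase i = {i + 1, i + 2, i + 3} := by revert i; decide
  simp [iSupIndep_iff_supIndep_univ, supIndep_iff_disjoint_erase, erase_eq, sup_assoc]

section Modular

variable {α : Type*} [CompleteLattice α] [IsModularLattice α]

theorem IsInducedFourCycle.iSupIndep_inf_succ {v : Fin 4 → α} (hv : IsInducedFourCycle v) :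
    iSupIndep fun i => v i ⊓ v (i + 1) := by
  obtain ⟨-, -, hopp⟩ := isInducedFourCycle_iff.1 hv
  refine iSupIndep_fin_four.2 fun i => ?_
  have := disjoint_inf_sup_of_disjoint_diagonals (hopp i) (by simpa [add_assoc] using hopp (i + 1))
  simpa [add_assoc] using this

theorem iSupIndep.isInducedFourCycle_sup_succ {a : Fin 4 → α} (ha : iSupIndep a)
    (hbot : ∀ i, a i ≠ ⊥) : IsInducedFourCycle fun i => a i ⊔ a (i + 1) := by
  have hopp (i : Fin 4) : Disjoint (a i ⊔ a (i + 1)) (a (i + 2) ⊔ a (i + 2 + 1)) := by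
    have hi := iSupIndep_fin_four.1 ha i
    have hi₁ := iSupIndep_fin_four.1 ha (i + 1)
    simp only [add_assoc, Fin.reduceAdd, add_zero] at hi hi₁ ⊢
    rw [sup_assoc] at hi
    exact (hi₁.mono_right le_sup_left).disjoint_sup_left_of_disjoint_sup_right hi
  refine isInducedFourCycle_iff.2 ⟨fun i htop => ?_, fun i => ?_, hopp⟩
  · exact hbot (i + 2) (sup_eq_bot_iff.1 (top_disjoint.1 (htop ▸ hopp i))).1
  · exact ne_bot_of_le_ne_bot (hbot (i + 1)) (le_inf le_sup_right le_sup_left)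

theorem exists_isInducedFourCycle_iff :
    (∃ v : Fin 4 → α, IsInducedFourCycle v) ↔ ∃ a : Fin 4 → α, (∀ i, a i ≠ ⊥) ∧ iSupIndep a :=
  ⟨fun ⟨_, hv⟩ => ⟨_, (isInducedFourCycle_iff.1 hv).2.1, hv.iSupIndep_inf_succ⟩,
    fun ⟨_, hbot, ha⟩ => ⟨_, ha.isInducedFourCycle_sup_succ hbot⟩⟩

end Modular

theorem Ideal.iSupIndep_iff_inf_sum_erase_eq_bot {R ι : Type*} [CommSemiring R] [Fintype ι]
    [DecidableEq ι] {a : ι → Ideal R} :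
    iSupIndep a ↔ ∀ i, a i ⊓ ∑ j ∈ univ.erase i, a j = ⊥ := by
  simp [iSupIndep_iff_supIndep_univ, supIndep_iff_disjoint_erase, Ideal.sum_eq_sup, disjoint_iff]

theorem intersectionGraph_inducedC4_iff_four_independent_general
    (R : Type*) [CommRing R] :
    (∃ v : Fin 4 → Ideal R,
      (∀ i, v i ≠ ⊥ ∧ v i ≠ ⊤) ∧ Function.Injective v ∧
      (∀ i j, i ≠ j →
        (v i ⊓ v j ≠ ⊥ ↔ (j.val = (i.val + 1) % 4 ∨ i.val = (j.val + 1) % 4)))) ↔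
    (∃ a : Fin 4 → Ideal R, (∀ i, a i ≠ ⊥) ∧
      (∀ i, a i ⊓ (∑ j ∈ Finset.univ.erase i, a j) = ⊥)) := by
  simp only [← Ideal.iSupIndep_iff_inf_sum_erase_eq_bot]
  exact exists_isInducedFourCycle_iff

/-- The intersection graph `Γ(R)` contains an induced cycle of length 4
if and only if `R` has four nonzero independent ideals.  Vertices `v 0, v 1, v 2, v 3`
induce a 4-cycle when they are pairwise distinct nontrivial ideals and `v i`, `v j`
(for `i ≠ j`) intersect nontrivially exactly when `i - j ≡ ±1 (mod 4)`. -/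
theorem intersectionGraph_inducedC4_iff_four_independent
    (R : Type*) [CommRing R] [Nontrivial R] :
    (∃ v : Fin 4 → Ideal R,
      (∀ i, v i ≠ ⊥ ∧ v i ≠ ⊤) ∧ Function.Injective v ∧
      (∀ i j, i ≠ j →
        (v i ⊓ v j ≠ ⊥ ↔ (j.val = (i.val + 1) % 4 ∨ i.val = (j.val + 1) % 4)))) ↔
    (∃ a : Fin 4 → Ideal R, (∀ i, a i ≠ ⊥) ∧
      (∀ i, a i ⊓ (∑ j ∈ Finset.univ.erase i, a j) = ⊥)) :=
  intersectionGraph_inducedC4_iff_four_independent_general R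
end

section
/- Let R be a reduced commutative ring with identity 1 ≠ 0 and let n ≥ 5 be a natural number. The intersection graph Γ(R) contains an induced cycle of length n if and only if there exist n nonzero independent ideals a₁, …, aₙ of R. Equivalently, Γ(R) is Cₙ-free if and only if R has no set of n nonzero independent ideals. -/
/-!
In a reduced ring two ideals meet trivially exactly when their product vanishes, so disjointness
of ideals distributes over sums; in particular nonzero ideals are independent as soon as they are
pairwise disjoint. Given an induced cycle `v₀, …, vₙ₋₁` of `Γ(R)`, the edge ideals `vᵢ ∩ vᵢ₊₁` are
nonzero and pairwise disjoint: two consecutive edges meet inside `vᵢ ∩ vᵢ₊₂ = 0`, which needs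
`n ≥ 4`. Conversely, pairwise disjoint nonzero ideals `aᵢ` give the induced cycle
`vᵢ = aᵢ + aᵢ₊₁`, in which consecutive vertices share `aᵢ₊₁`.
-/

open Function

namespace Fin

variable {n : ℕ} [NeZero n]

theorem val_eq_add_one_mod_iff {i j : Fin n} : j.val = (i.val + 1) % n ↔ j = i + 1 := by
  rw [Fin.ext_iff, Fin.val_add, Fin.val_one', Nat.add_mod_mod]

theorem add_one_ne_self (hn : 2 ≤ n) (i : Fin n) : i + 1 ≠ i := by
  rw [Ne, add_eq_left, Fin.ext_iff, Fin.val_one', Fin.val_zero, Nat.mod_eq_of_lt (by omega)]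
  omega

theorem add_one_add_one_ne_self (hn : 3 ≤ n) (i : Fin n) : i + 1 + 1 ≠ i := by
  rw [add_assoc, Ne, add_eq_left, Fin.ext_iff]
  simp only [Fin.val_add, Fin.val_one', Fin.val_zero, Nat.mod_add_mod, Nat.add_mod_mod]
  rw [Nat.mod_eq_of_lt (by omega)]
  omega

theorem add_one_add_one_add_one_ne_self (hn : 4 ≤ n) (i : Fin n) : i + 1 + 1 + 1 ≠ i := by
  rw [add_assoc, add_assoc, Ne, add_eq_left, Fin.ext_iff]
  simp only [Fin.val_add, Fin.val_one', Fin.val_zero, Nat.mod_add_mod, Nat.add_mod_mod]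
  rw [Nat.mod_eq_of_lt (by omega)]
  omega

end Fin

namespace Ideal

variable {R : Type*} [CommSemiring R] [IsReduced R]

theorem disjoint_iff_mul_eq_bot {I J : Ideal R} : Disjoint I J ↔ I * J = ⊥ := by
  refine ⟨fun h => le_bot_iff.mp (mul_le_inf.trans h.le_bot), fun h => disjoint_iff.mpr ?_⟩
  refine le_bot_iff.mp ?_
  calc I ⊓ J ≤ radical I ⊓ radical J := inf_le_inf le_radical le_radical
    _ = ⊥ := by rw [← radical_mul, h, radical_bot_of_isReduced]

theorem disjoint_sup_right_of_isReduced {I J K : Ideal R} (hJ : Disjoint I J) (hK : Disjoint I K) :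
    Disjoint I (J ⊔ K) := by
  rw [disjoint_iff_mul_eq_bot, mul_sup, disjoint_iff_mul_eq_bot.mp hJ,
    disjoint_iff_mul_eq_bot.mp hK, sup_bot_eq]

theorem disjoint_sum_erase_iff_pairwise_disjoint {ι : Type*} [Fintype ι] [DecidableEq ι]
    {a : ι → Ideal R} :
    (∀ i, Disjoint (a i) (∑ j ∈ Finset.univ.erase i, a j)) ↔ Pairwise (Disjoint on a) := by
  refine ⟨fun h i j hij => (h i).mono_right ?_, fun h i => ?_⟩
  · exact Finset.single_le_sum (fun k _ => zero_le) (Finset.mem_erase.mpr ⟨hij.symm, Finset.mem_univ j⟩)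
  · refine Finset.sum_induction _ (Disjoint (a i)) (fun J K hJ hK => ?_) ?_ fun j hj => ?_
    · exact disjoint_sup_right_of_isReduced hJ hK
    · exact disjoint_bot_right
    · exact h (Finset.ne_of_mem_erase hj).symm

end Ideal

section CycleToEdges

variable {α : Type*} [SemilatticeInf α] [OrderBot α] {n : ℕ} [NeZero n] {v : Fin n → α}

theorem inf_add_one_ne_bot (hn : 2 ≤ n)
    (hv : ∀ i j, i ≠ j → (¬Disjoint (v i) (v j) ↔ j = i + 1 ∨ i = j + 1)) (i : Fin n) :
    v i ⊓ v (i + 1) ≠ ⊥ := fun h =>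
  (hv i (i + 1) (Fin.add_one_ne_self hn i).symm).mpr (Or.inl rfl) (disjoint_iff.mpr h)

theorem pairwise_disjoint_inf_add_one (hn : 4 ≤ n)
    (hv : ∀ i j, i ≠ j → (¬Disjoint (v i) (v j) ↔ j = i + 1 ∨ i = j + 1)) :
    Pairwise (Disjoint on fun i => v i ⊓ v (i + 1)) := by
  have hfar : ∀ i j, i ≠ j → j ≠ i + 1 → i ≠ j + 1 → Disjoint (v i) (v j) :=
    fun i j hij h₁ h₂ => not_not.mp fun h => ((hv i j hij).mp h).elim h₁ h₂
  have hconsecutive : ∀ i, Disjoint (v i ⊓ v (i + 1)) (v (i + 1) ⊓ v (i + 1 + 1)) := fun i =>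
    (hfar i (i + 1 + 1) (Fin.add_one_add_one_ne_self (by omega) i).symm
      (Fin.add_one_ne_self (by omega) (i + 1))
      (Fin.add_one_add_one_add_one_ne_self hn i).symm).mono inf_le_left inf_le_right
  intro i j hij
  by_cases h₁ : j = i + 1
  · exact h₁ ▸ hconsecutive i
  by_cases h₂ : i = j + 1
  · exact h₂ ▸ (hconsecutive j).symm
  exact (hfar i j hij h₁ h₂).mono inf_le_left inf_le_left

end CycleToEdges

section EdgesToCycle

variable {R : Type*} [CommSemiring R] [IsReduced R] {n : ℕ} [NeZero n] {a : Fin n → Ideal R}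

theorem not_disjoint_sup_add_one_iff (ha₀ : ∀ i, a i ≠ ⊥) (ha : Pairwise (Disjoint on a))
    {i j : Fin n} (hij : i ≠ j) :
    ¬Disjoint (a i ⊔ a (i + 1)) (a j ⊔ a (j + 1)) ↔ j = i + 1 ∨ i = j + 1 := by
  constructor
  · intro h
    by_contra! hfar
    have hdisj : ∀ k, k ≠ j → k ≠ j + 1 → Disjoint (a j ⊔ a (j + 1)) (a k) := fun k h₁ h₂ =>
      (Ideal.disjoint_sup_right_of_isReduced (ha h₁) (ha h₂)).symm
    exact h (Ideal.disjoint_sup_right_of_isReduced (hdisj i hij hfar.2)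
      (hdisj (i + 1) (Ne.symm hfar.1) fun h' => hij (add_right_cancel h'))).symm
  · rintro (rfl | rfl)
    · exact fun h => ha₀ (i + 1) (disjoint_self.mp (h.mono le_sup_right le_sup_left))
    · exact fun h => ha₀ (j + 1) (disjoint_self.mp (h.mono le_sup_left le_sup_right))

theorem sup_add_one_ne_top (hn : 3 ≤ n) (ha₀ : ∀ i, a i ≠ ⊥) (ha : Pairwise (Disjoint on a))
    (i : Fin n) : a i ⊔ a (i + 1) ≠ ⊤ := fun htop =>
  ha₀ (i + 1 + 1) <| disjoint_top.mp <| htop ▸ Ideal.disjoint_sup_right_of_isReduced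
    (ha (Fin.add_one_add_one_ne_self hn i)) (ha (Fin.add_one_ne_self (by omega) (i + 1)))

theorem injective_sup_add_one (hn : 3 ≤ n) (ha₀ : ∀ i, a i ≠ ⊥) (ha : Pairwise (Disjoint on a)) :
    Injective fun i => a i ⊔ a (i + 1) := by
  have hshift : ∀ k, a k ⊔ a (k + 1) ≠ a (k + 1) ⊔ a (k + 1 + 1) := fun k h =>
    ha₀ k <| (Ideal.disjoint_sup_right_of_isReduced (ha (Fin.add_one_ne_self (by omega) k).symm)
      (ha (Fin.add_one_add_one_ne_self hn k).symm)).eq_bot_of_le (h ▸ le_sup_left)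
  intro i j hv
  dsimp only at hv
  by_contra hij
  have hmeet : ¬Disjoint (a i ⊔ a (i + 1)) (a j ⊔ a (j + 1)) := by
    rw [hv, disjoint_self]
    exact fun h => ha₀ j (sup_eq_bot_iff.mp h).1
  rcases (not_disjoint_sup_add_one_iff ha₀ ha hij).mp hmeet with rfl | rfl
  · exact hshift i hv
  · exact hshift j hv.symm

end EdgesToCycle

theorem intersectionGraph_inducedCn_iff_independent_of_reduced_general
    (R : Type*) [CommRing R] [IsReduced R] (n : ℕ) (hn : 5 ≤ n) :
    (∃ v : Fin n → Ideal R,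
      (∀ i, v i ≠ ⊥ ∧ v i ≠ ⊤) ∧ Function.Injective v ∧
      (∀ i j, i ≠ j →
        (v i ⊓ v j ≠ ⊥ ↔ (j.val = (i.val + 1) % n ∨ i.val = (j.val + 1) % n)))) ↔
    (∃ a : Fin n → Ideal R, (∀ i, a i ≠ ⊥) ∧
      (∀ i, a i ⊓ (∑ j ∈ Finset.univ.erase i, a j) = ⊥)) := by
  have : NeZero n := ⟨by omega⟩
  simp only [ne_eq, Fin.val_eq_add_one_mod_iff, ← disjoint_iff,
    Ideal.disjoint_sum_erase_iff_pairwise_disjoint]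
  constructor
  · rintro ⟨v, -, -, hv⟩
    exact ⟨fun i => v i ⊓ v (i + 1), inf_add_one_ne_bot (by omega) hv,
      pairwise_disjoint_inf_add_one (by omega) hv⟩
  · rintro ⟨a, ha₀, ha⟩
    exact ⟨fun i => a i ⊔ a (i + 1),
      fun i => ⟨fun h => ha₀ i (sup_eq_bot_iff.mp h).1, sup_add_one_ne_top (by omega) ha₀ ha i⟩,
      injective_sup_add_one (by omega) ha₀ ha, fun i j => not_disjoint_sup_add_one_iff ha₀ ha⟩

/-- Let `R` be a reduced commutative ring with `1 ≠ 0` and `n ≥ 5`.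
The intersection graph `Γ(R)` contains an induced cycle of length `n` if and only if
`R` has `n` nonzero independent ideals. -/
theorem intersectionGraph_inducedCn_iff_independent_of_reduced
    (R : Type*) [CommRing R] [Nontrivial R] [IsReduced R] (n : ℕ) (hn : 5 ≤ n) :
    (∃ v : Fin n → Ideal R,
      (∀ i, v i ≠ ⊥ ∧ v i ≠ ⊤) ∧ Function.Injective v ∧
      (∀ i j, i ≠ j →
        (v i ⊓ v j ≠ ⊥ ↔ (j.val = (i.val + 1) % n ∨ i.val = (j.val + 1) % n)))) ↔
    (∃ a : Fin n → Ideal R, (∀ i, a i ≠ ⊥) ∧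
      (∀ i, a i ⊓ (∑ j ∈ Finset.univ.erase i, a j) = ⊥)) :=
  intersectionGraph_inducedCn_iff_independent_of_reduced_general R n hn
end

section
/- Let R be a commutative ring with identity 1 ≠ 0 and let m be a maximal ideal of R with m ≠ 0. If m is a pendant vertex of the intersection graph Γ(R) (i.e. m has exactly one neighbor in Γ(R)), then R is a local ring with maximal ideal m, m is a principal ideal, m³ = 0, m² ≠ 0, and the only nontrivial ideals of R are m and m²; in particular Γ(R) is a single edge. -/
/-!
The unique neighbour `b` of `m` lies strictly inside `m`. A second maximal ideal `M` either
meets `m`, and is then the neighbour `b ⊊ m`, or satisfies `m ⊓ M = ⊥`; then `m * M = ⊥` and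
`m = m * (J ⊔ M) ≤ J` for every nonzero `J ≤ m`, so `m` would be a minimal ideal, which
`⊥ < b < m` forbids. Hence `R` is local and its only nontrivial ideals are `m` and `b`.
Any `x ∈ m \ b` generates `m`, and a subideal of `span {x}` missing `x` lies in `m * span {x}`,
so `⊥ < b ≤ m ^ 2`. As `m` is finitely generated, Nakayama gives `m ^ 3 < m ^ 2 < m`, which
leaves no room except `m ^ 2 = b` and `m ^ 3 = ⊥`.
-/

open Ideal IsLocalRing

theorem Ideal.eq_of_le_of_inf_maximal_eq_bot {R : Type*} [CommRing R] {m M J : Ideal R}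
    (hM : M.IsMaximal) (hmM : m ⊓ M = ⊥) (hJ : J ≠ ⊥) (hJm : J ≤ m) : J = m := by
  have hJM : J ⊔ M = ⊤ := by
    refine hM.out.2 _ (lt_of_le_of_ne le_sup_right fun h => hJ ?_)
    exact eq_bot_iff.mpr (hmM ▸ le_inf hJm (h ▸ le_sup_left))
  refine le_antisymm hJm ?_
  calc m = m * (J ⊔ M) := by rw [hJM, mul_top]
    _ = m * J ⊔ m * M := mul_sup _ _ _
    _ ≤ J ⊔ m ⊓ M := sup_le_sup mul_le_right mul_le_inf
    _ = J := by rw [hmM, sup_bot_eq]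

namespace IsLocalRing

variable {R : Type*} [CommRing R] [IsLocalRing R]

theorem maximalIdeal_mul_lt {I : Ideal R} (hI : I.FG) (h : I ≠ ⊥) : maximalIdeal R * I < I :=
  lt_of_le_of_ne mul_le_right fun heq =>
    h (Submodule.eq_bot_of_le_smul_of_le_jacobson_bot _ I hI heq.ge (maximalIdeal_le_jacobson _))

theorem maximalIdeal_pow_succ_lt (hfg : (maximalIdeal R).FG) {n : ℕ}
    (hn : maximalIdeal R ^ n ≠ ⊥) : maximalIdeal R ^ (n + 1) < maximalIdeal R ^ n := by
  simpa only [pow_succ'] using maximalIdeal_mul_lt hfg.pow hn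

theorem le_maximalIdeal_mul_of_le_span_singleton {J : Ideal R} {x : R} (hJ : J ≤ span {x})
    (hx : x ∉ J) : J ≤ maximalIdeal R * span {x} := by
  intro y hy
  obtain ⟨r, rfl⟩ := mem_span_singleton'.mp (hJ hy)
  have hr : r ∈ maximalIdeal R := fun ⟨u, hu⟩ =>
    hx (by simpa [← hu, ← mul_assoc] using J.mul_mem_left (↑u⁻¹ : R) hy)
  exact mul_mem_mul hr (mem_span_singleton_self x)

end IsLocalRing

section UniqueNeighbor

variable {R : Type*} [CommRing R] {m b : Ideal R} (hm : m.IsMaximal)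
  (hnbr : ∀ I : Ideal R, I ≠ ⊥ → I ≠ ⊤ → I ≠ m → m ⊓ I ≠ ⊥ → I = b)
include hm hnbr

theorem lt_of_unique_neighbor (hbT : b ≠ ⊤) (hbm : b ≠ m) (hmb : m ⊓ b ≠ ⊥) :
    b < m := by
  refine lt_of_le_of_ne ?_ hbm
  by_cases h : m ⊓ b = m
  · exact absurd (hm.eq_of_le hbT (h ▸ inf_le_right)).symm hbm
  · exact hnbr _ hmb (ne_top_of_le_ne_top hm.ne_top inf_le_left) h
      (by rwa [inf_of_le_right inf_le_left]) ▸ inf_le_left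

theorem eq_of_isMaximal_of_unique_neighbor (hb : b ≠ ⊥) (hbm : b < m) {M : Ideal R}
    (hM : M.IsMaximal) : M = m := by
  by_contra hMm
  by_cases hmM : m ⊓ M = ⊥
  · exact hbm.ne (eq_of_le_of_inf_maximal_eq_bot hM hmM hb hbm.le)
  · have hMb : M = b := hnbr M (fun h => hmM (h ▸ inf_bot_eq m)) hM.ne_top hMm hmM
    exact hMm (hM.eq_of_le hm.ne_top (hMb ▸ hbm.le))

end UniqueNeighbor

theorem intersectionGraph_maximal_pendant_general
    (R : Type*) [CommRing R] (m : Ideal R)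
    (h_max : m.IsMaximal)
    (h_pendant : ∃! b : Ideal R, (b ≠ ⊥ ∧ b ≠ ⊤) ∧ b ≠ m ∧ m ⊓ b ≠ ⊥) :
    IsLocalRing R ∧ (∀ I : Ideal R, I.IsMaximal → I = m) ∧ m.IsPrincipal ∧
      m ^ 3 = ⊥ ∧ m ^ 2 ≠ ⊥ ∧
      (∀ I : Ideal R, I ≠ ⊥ → I ≠ ⊤ → I = m ∨ I = m ^ 2) := by
  obtain ⟨b, ⟨⟨hb, hbT⟩, hbm, hmb⟩, huniq⟩ := h_pendant
  have hnbr : ∀ I : Ideal R, I ≠ ⊥ → I ≠ ⊤ → I ≠ m → m ⊓ I ≠ ⊥ → I = b :=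
    fun I h₁ h₂ h₃ h₄ => huniq I ⟨⟨h₁, h₂⟩, h₃, h₄⟩
  have hblt : b < m := lt_of_unique_neighbor h_max hnbr hbT hbm hmb
  have hmax_eq : ∀ I : Ideal R, I.IsMaximal → I = m :=
    fun _ => eq_of_isMaximal_of_unique_neighbor h_max hnbr hb hblt
  have hloc : IsLocalRing R := .of_unique_max_ideal ⟨m, h_max, hmax_eq⟩
  obtain rfl : m = maximalIdeal R := eq_maximalIdeal h_max
  have hclass : ∀ I : Ideal R, I ≠ ⊥ → I ≠ ⊤ → I = maximalIdeal R ∨ I = b :=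
    fun I h₁ h₂ => or_iff_not_imp_left.mpr fun h₃ =>
      hnbr I h₁ h₂ h₃ (by rwa [inf_of_le_right (le_maximalIdeal h₂)])
  obtain ⟨x, hxm, hxb⟩ := SetLike.exists_of_lt hblt
  have hspan : span {x} = maximalIdeal R := by
    refine (hclass _ ?_ ?_).resolve_right fun h => hxb (h ▸ mem_span_singleton_self x)
    · exact span_singleton_eq_bot.not.mpr fun h => hxb (h ▸ b.zero_mem)
    · exact ne_top_of_le_ne_top h_max.ne_top ((span_singleton_le_iff_mem _).mpr hxm)
  have hfg : (maximalIdeal R).FG := ⟨{x}, by simpa using hspan⟩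
  have hb_le : b ≤ maximalIdeal R ^ 2 := by
    simpa only [sq, hspan] using
      le_maximalIdeal_mul_of_le_span_singleton (hspan ▸ hblt.le) hxb
  have hm2 : maximalIdeal R ^ 2 ≠ ⊥ := ne_bot_of_le_ne_bot hb hb_le
  have hm21 : maximalIdeal R ^ 2 < maximalIdeal R := by
    simpa using maximalIdeal_pow_succ_lt hfg (n := 1) (by simpa using hblt.bot_lt.ne')
  have hm32 : maximalIdeal R ^ 3 < maximalIdeal R ^ 2 := maximalIdeal_pow_succ_lt hfg hm2
  have hm2b : maximalIdeal R ^ 2 = b := (hclass _ hm2 (ne_top_of_lt hm21)).resolve_left hm21.ne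
  refine ⟨hloc, hmax_eq, ⟨x, hspan.symm⟩, ?_, hm2,
    fun I h₁ h₂ => hm2b ▸ hclass I h₁ h₂⟩
  by_contra hm3
  rcases hclass _ hm3 (ne_top_of_lt (hm32.trans hm21)) with h | h
  · exact (hm32.trans hm21).ne h
  · exact hm32.ne (h.trans hm2b.symm)

/-- Let `R` be a commutative ring with `1 ≠ 0` and `m ≠ 0` a maximal
ideal of `R` which is a pendant vertex of the intersection graph `Γ(R)` (it has exactly
one neighbour).  Then `R` is local with maximal ideal `m`, `m` is principal, `m³ = 0`,
`m² ≠ 0`, and the only nontrivial ideals of `R` are `m` and `m²`; in particular `Γ(R)`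
is a single edge. -/
theorem intersectionGraph_maximal_pendant
    (R : Type*) [CommRing R] [Nontrivial R] (m : Ideal R)
    (h_max : m.IsMaximal) (h_ne_bot : m ≠ ⊥)
    (h_pendant : ∃! b : Ideal R, (b ≠ ⊥ ∧ b ≠ ⊤) ∧ b ≠ m ∧ m ⊓ b ≠ ⊥) :
    IsLocalRing R ∧ (∀ I : Ideal R, I.IsMaximal → I = m) ∧ m.IsPrincipal ∧
      m ^ 3 = ⊥ ∧ m ^ 2 ≠ ⊥ ∧
      (∀ I : Ideal R, I ≠ ⊥ → I ≠ ⊤ → I = m ∨ I = m ^ 2) :=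
  intersectionGraph_maximal_pendant_general R m h_max h_pendant
end

section
/- Let (R, m) be a local commutative ring with identity 1 ≠ 0 whose maximal ideal m is not a principal ideal. If the intersection graph Γ(R) is triangle-free (it contains no three pairwise adjacent vertices), then m² = 0. -/
/-!
If `a, b ∈ m` with `a * b ≠ 0`, then `(a * b) ⊊ (a) ⊊ m`: the first inclusion is strict by
Nakayama's lemma (`b` lies in the Jacobson radical), the second because `m` is not principal.
Any strict chain `I ⊊ J ⊊ K` of nonzero proper ideals is a triangle of `Γ(R)`, since the
pairwise intersections are `I` and `J`.
-/

open IsLocalRing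

namespace Ideal

variable {R : Type*} [CommRing R]

theorem exists_triangle_of_lt_of_lt {I J K : Ideal R} (hI : I ≠ ⊥) (hIJ : I < J) (hJK : J < K)
    (hK : K ≠ ⊤) :
    ∃ I J K : Ideal R,
      (I ≠ ⊥ ∧ I ≠ ⊤) ∧ (J ≠ ⊥ ∧ J ≠ ⊤) ∧ (K ≠ ⊥ ∧ K ≠ ⊤) ∧
      I ≠ J ∧ J ≠ K ∧ I ≠ K ∧ I ⊓ J ≠ ⊥ ∧ J ⊓ K ≠ ⊥ ∧ I ⊓ K ≠ ⊥ := by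
  have hIK : I < K := hIJ.trans hJK
  have hJ : J ≠ ⊥ := ne_bot_of_gt hIJ
  refine ⟨I, J, K, ⟨hI, ne_top_of_lt hIK⟩, ⟨hJ, ne_top_of_lt hJK⟩, ⟨ne_bot_of_gt hIK, hK⟩,
    hIJ.ne, hJK.ne, hIK.ne, ?_, ?_, ?_⟩
  · rwa [inf_eq_left.mpr hIJ.le]
  · rwa [inf_eq_left.mpr hJK.le]
  · rwa [inf_eq_left.mpr hIK.le]

theorem span_singleton_mul_lt_span_singleton {a b : R} (hb : b ∈ jacobson ⊥) (hab : a * b ≠ 0) :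
    span {a * b} < span {a} := by
  refine lt_of_le_not_ge (span_singleton_le_span_singleton.mpr (dvd_mul_right a b)) ?_
  intro hle
  obtain ⟨r, hr⟩ := span_singleton_le_span_singleton.mp hle
  have hunit : IsUnit (b * -r + 1) := mem_jacobson_bot.mp hb (-r)
  have ha : a * (b * -r + 1) = 0 := by linear_combination hr
  exact hab (by rw [hunit.mul_left_eq_zero.mp ha, zero_mul])

end Ideal

theorem IsLocalRing.span_singleton_lt_maximalIdeal {R : Type*} [CommRing R] [IsLocalRing R]
    (h_not_principal : ¬ (maximalIdeal R).IsPrincipal) {a : R} (ha : a ∈ maximalIdeal R) :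
    Ideal.span {a} < maximalIdeal R :=
  lt_of_le_of_ne ((Ideal.span_singleton_le_iff_mem _).mpr ha)
    fun h => h_not_principal ⟨a, h.symm⟩

/-- Let `(R, m)` be a local commutative ring with `1 ≠ 0` whose maximal
ideal `m` is not principal.  If the intersection graph `Γ(R)` is triangle-free, then
`m² = 0`. -/
theorem maximalIdeal_sq_eq_bot_of_triangleFree
    (R : Type*) [CommRing R] [IsLocalRing R]
    (h_not_principal : ¬ (IsLocalRing.maximalIdeal R).IsPrincipal)
    (h_triangle_free : ¬ ∃ I J K : Ideal R,
      (I ≠ ⊥ ∧ I ≠ ⊤) ∧ (J ≠ ⊥ ∧ J ≠ ⊤) ∧ (K ≠ ⊥ ∧ K ≠ ⊤) ∧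
      I ≠ J ∧ J ≠ K ∧ I ≠ K ∧ I ⊓ J ≠ ⊥ ∧ J ⊓ K ≠ ⊥ ∧ I ⊓ K ≠ ⊥) :
    IsLocalRing.maximalIdeal R ^ 2 = ⊥ := by
  rw [pow_two, ← le_bot_iff, Ideal.mul_le]
  intro a ha b hb
  rw [Ideal.mem_bot]
  by_contra hab
  have hb_jacobson : b ∈ Ideal.jacobson ⊥ := maximalIdeal_le_jacobson ⊥ hb
  exact h_triangle_free <| Ideal.exists_triangle_of_lt_of_lt
    (by rwa [Ne, Ideal.span_singleton_eq_bot])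
    (Ideal.span_singleton_mul_lt_span_singleton hb_jacobson hab)
    (span_singleton_lt_maximalIdeal h_not_principal ha) (maximalIdeal.isMaximal R).ne_top
end
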